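/- Every Grassmannian Schubert variety is a rank variety: for a strictly increasing sequence $u_1 < \cdots < u_k$ in $\{1,\dots,n\}$, the Schubert variety $X_u = \{\Lambda \in G(k,n) : \dim(\Lambda \cap F_{u_i}) \geq i\}$ (with $F_j = \mathrm{Span}(e_1,\dots,e_j)$) equals the rank variety $X(M)$ for the rank set $M = \{W_1, \dots, W_k\}$, where $W_i = \mathrm{Span}(e_{i}, \dots, e_{u_i})$ (note $u_i \ge i$); these intervals have distinct left endpoints $i$ and distinct right endpoints $u_i$, so $M$ is a rank set and $X_u = X(M)$. -/

import Mathlib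

/- STATEMENT 18: every Grassmannian Schubert variety is a rank variety.  For a
strictly increasing sequence u₁ < ⋯ < u_k in {1,…,n}, the Schubert variety
X_u = {Λ ∈ G(k,n) : dim(Λ ∩ F_{u_i}) ≥ i} (F_j = Span(e_1,…,e_j)) equals the
rank variety X(M) for the rank set M = {W₁, …, W_k}, W_i = Span(e_i, …, e_{u_i})
(these intervals have distinct left endpoints i and distinct right endpoints
u_i).  The Grassmannian carries the Zariski topology, and X(M) is the Zariski
closure of the set of k-planes spanned by a basis with b_i ∈ W_i. -/

noncomputable section

open Module

/-- The Zariski topology on affine space `σ → ℂ`. -/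
def zariskiTop (σ : Type*) : TopologicalSpace (σ → ℂ) :=
  TopologicalSpace.generateFrom
    {s | ∃ I : Ideal (MvPolynomial σ ℂ), s = (MvPolynomial.zeroLocus ℂ I)ᶜ}

instance matrixSpaceTop (k n : ℕ) : TopologicalSpace (Fin k × Fin n → ℂ) :=
  zariskiTop (Fin k × Fin n)

/-- The Grassmannian of `k`-dimensional subspaces of `ℂⁿ`. -/
def Gr (k n : ℕ) : Type :=
  {Λ : Submodule ℂ (Fin n → ℂ) // finrank ℂ Λ = k}

/-- The row span of a `k × n` matrix. -/
def rowSpan {k n : ℕ} (A : Fin k × Fin n → ℂ) : Submodule ℂ (Fin n → ℂ) :=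
  Submodule.span ℂ (Set.range fun i : Fin k => fun j : Fin n => A (i, j))

/-- The Zariski topology on the Grassmannian (quotient topology from full-rank
matrices). -/
instance GrTop (k n : ℕ) : TopologicalSpace (Gr k n) :=
  TopologicalSpace.coinduced
    (fun A : {A : Fin k × Fin n → ℂ // finrank ℂ (rowSpan A) = k} => (⟨rowSpan A.1, A.2⟩ : Gr k n))
    inferInstance

/-- The span of the basis vectors `e_t` with `l ≤ t ≤ r` (1-based indices). -/
def intervalSubspaceN (n : ℕ) (l r : ℕ) : Submodule ℂ (Fin n → ℂ) :=
  Submodule.span ℂ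
    ((fun t : Fin n => (Pi.basisFun ℂ (Fin n)) t) '' {t | l ≤ (t : ℕ) + 1 ∧ (t : ℕ) + 1 ≤ r})

/-- The rank variety `X(M)` of the rank set with intervals `[l j, r j]`
(1-based): the Zariski closure of the set of `k`-planes having a basis
`b₁, …, b_k` with `b j ∈ W j = Span(e_{l j}, …, e_{r j})`. -/
def rankVarietyN {k : ℕ} (n : ℕ) (l r : Fin k → ℕ) : Set (Gr k n) :=
  closure {x : Gr k n | ∃ b : Fin k → (Fin n → ℂ),
    (∀ j, b j ∈ intervalSubspaceN n (l j) (r j)) ∧ LinearIndependent ℂ b ∧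
      x.1 = Submodule.span ℂ (Set.range b)}

/-- The Schubert variety `X_u ⊆ G(k,n)`: the `k`-planes with
`dim(Λ ∩ F_{u_i}) ≥ i` for all `i` (here `i` is 0-based, so the condition reads
`dim(Λ ∩ F_{u i}) ≥ i + 1`). -/
def SchubertXu {k : ℕ} (n : ℕ) (u : Fin k → ℕ) : Set (Gr k n) :=
  {Λ | ∀ i : Fin k, (i : ℕ) + 1 ≤ finrank ℂ ↥(Λ.1 ⊓ intervalSubspaceN n 1 (u i))}

section Aux
open Matrix

-- coordinate-vanishing submodule
def coordZero (n : ℕ) (P : Fin n → Prop) : Submodule ℂ (Fin n → ℂ) where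
  carrier := {x | ∀ t, P t → x t = 0}
  add_mem' := by intro a b ha hb t ht; simp [Set.mem_setOf_eq] at *; simp [ha t ht, hb t ht]
  zero_mem' := by intro t _; rfl
  smul_mem' := by intro cc a ha t ht; simp [Set.mem_setOf_eq] at *; simp [ha t ht]

lemma mem_interval_iff {n l r : ℕ} (x : Fin n → ℂ) :
    x ∈ intervalSubspaceN n l r ↔
      ∀ t : Fin n, ((t : ℕ) + 1 < l ∨ r < (t : ℕ) + 1) → x t = 0 := by
  constructor
  · intro hx
    have hle : intervalSubspaceN n l r ≤ coordZero n (fun t => (t:ℕ)+1 < l ∨ r < (t:ℕ)+1) := by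
      rw [intervalSubspaceN, Submodule.span_le]
      rintro y ⟨t, ⟨ht1, ht2⟩, rfl⟩
      intro t' ht'
      have hne : t' ≠ t := by rintro rfl; omega
      simp [Pi.basisFun_apply, Pi.single_apply, hne]
    exact hle hx
  · intro hx
    have hrepr : x = ∑ t : Fin n, x t • fun j => if t = j then (1:ℂ) else 0 := pi_eq_sum_univ x
    rw [hrepr]
    apply Submodule.sum_mem
    intro t _
    by_cases ht : l ≤ (t:ℕ) + 1 ∧ (t:ℕ) + 1 ≤ r
    · apply Submodule.smul_mem
      apply Submodule.subset_span
      refine ⟨t, ht, ?_⟩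
      funext j
      simp [Pi.basisFun_apply, Pi.single_apply, eq_comm]
    · have : x t = 0 := hx t (by omega)
      simp [this]

lemma mem_F_iff {n m : ℕ} (x : Fin n → ℂ) :
    x ∈ intervalSubspaceN n 1 m ↔ ∀ t : Fin n, m ≤ (t : ℕ) → x t = 0 := by
  rw [mem_interval_iff]
  constructor
  · intro h t ht; exact h t (by omega)
  · intro h t ht; exact h t (by omega)

lemma interval_mono {n l r l' r' : ℕ} (hl : l' ≤ l) (hr : r ≤ r') :
    intervalSubspaceN n l r ≤ intervalSubspaceN n l' r' := by
  intro x hx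
  rw [mem_interval_iff] at hx ⊢
  intro t ht
  exact hx t (by omega)

-- general submatrix rank bound
lemma rank_submatrix_le' {a b s t : ℕ} (B : Matrix (Fin a) (Fin b) ℂ)
    (f : Fin s → Fin a) (g : Fin t → Fin b) : (B.submatrix f g).rank ≤ B.rank := by
  classical
  have h1 : B.submatrix f g =
      (Matrix.of fun i l => if l = f i then (1:ℂ) else 0) * B *
        (Matrix.of fun l j => if l = g j then (1:ℂ) else 0) := by
    ext i j
    simp [Matrix.mul_apply, Finset.sum_ite_eq, Finset.sum_ite_eq', ite_mul, mul_ite,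
      Finset.mul_sum, Finset.sum_mul]
  rw [h1]
  exact le_trans (Matrix.rank_mul_le_left _ _)
    (Matrix.rank_mul_le_right _ _)

-- extract independent rows
lemma exists_indep_rows {a b : ℕ} (B : Matrix (Fin a) (Fin b) ℂ) (s : ℕ) (h : s ≤ B.rank) :
    ∃ f : Fin s → Fin a, LinearIndependent ℂ (fun i => B (f i)) := by
  classical
  rw [Matrix.rank_eq_finrank_span_row] at h
  obtain ⟨bs, hbsub, hspan, hind⟩ := exists_linearIndependent ℂ (Set.range B)
  haveI : Fintype bs := ((Set.finite_range B).subset hbsub).fintype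
  have hcard : finrank ℂ (Submodule.span ℂ bs) = bs.toFinset.card :=
    finrank_span_set_eq_card hind
  rw [hspan] at hcard
  have hs : s ≤ Fintype.card bs := by
    rw [← Set.toFinset_card]; exact h.trans hcard.le
  obtain ⟨emb⟩ := Function.Embedding.nonempty_of_card_le (by simpa using hs :
    Fintype.card (Fin s) ≤ Fintype.card bs)
  have hind2 : LinearIndependent ℂ (fun i : Fin s => ((emb i : bs) : Fin b → ℂ)) :=
    hind.comp emb emb.injective
  have hmem : ∀ i : Fin s, ((emb i : bs) : Fin b → ℂ) ∈ Set.range B :=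
    fun i => hbsub (emb i).2
  choose f hf using fun i => hmem i
  refine ⟨f, ?_⟩
  have : (fun i => B (f i)) = fun i : Fin s => ((emb i : bs) : Fin b → ℂ) := by
    funext i; exact hf i
  rw [this]; exact hind2

-- rank vs minors
lemma rank_ge_iff_minor {a b : ℕ} (B : Matrix (Fin a) (Fin b) ℂ) (s : ℕ) :
    s ≤ B.rank ↔ ∃ f : Fin s → Fin a, ∃ g : Fin s → Fin b, (B.submatrix f g).det ≠ 0 := by
  classical
  constructor
  · intro h
    obtain ⟨f, hf⟩ := exists_indep_rows B s h
    have hN : LinearIndependent ℂ (B.submatrix f id) := hf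
    have hNrank : (B.submatrix f id).rank = s := by
      have := hN.rank_matrix; rw [Fintype.card_fin] at this; exact this
    have hT : s ≤ (B.submatrix f id)ᵀ.rank := by
      rw [Matrix.rank_transpose, hNrank]
    obtain ⟨g, hg⟩ := exists_indep_rows (B.submatrix f id)ᵀ s hT
    have hS : LinearIndependent ℂ (fun i => ((B.submatrix f id)ᵀ.submatrix g id) i) := hg
    have hunit : IsUnit ((B.submatrix f id)ᵀ.submatrix g id) :=
      Matrix.linearIndependent_rows_iff_isUnit.mp hS
    have hdet : ((B.submatrix f id)ᵀ.submatrix g id).det ≠ 0 :=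
      (Matrix.isUnit_iff_isUnit_det _).mp hunit |>.ne_zero
    refine ⟨f, g, ?_⟩
    have heq : (B.submatrix f g)ᵀ = (B.submatrix f id)ᵀ.submatrix g id := by
      ext i j; simp [Matrix.submatrix_apply]
    rw [← Matrix.det_transpose, heq]
    exact hdet
  · rintro ⟨f, g, hdet⟩
    have hunit : IsUnit (B.submatrix f g) :=
      (Matrix.isUnit_iff_isUnit_det _).mpr (isUnit_iff_ne_zero.mpr hdet)
    have : (B.submatrix f g).rank = s := by
      rw [Matrix.rank_of_isUnit _ hunit, Fintype.card_fin]
    calc s = (B.submatrix f g).rank := this.symm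
    _ ≤ B.rank := rank_submatrix_le' B f g

-- the linear map zeroing out coordinates < m
def cutMap (n m : ℕ) : (Fin n → ℂ) →ₗ[ℂ] (Fin n → ℂ) where
  toFun x := fun t => if m ≤ (t : ℕ) then x t else 0
  map_add' := by intro x y; funext t; by_cases h : m ≤ (t:ℕ) <;> simp [h]
  map_smul' := by intro c x; funext t; by_cases h : m ≤ (t:ℕ) <;> simp [h]

lemma ker_cutMap (n m : ℕ) : LinearMap.ker (cutMap n m) = intervalSubspaceN n 1 m := by
  ext x
  rw [LinearMap.mem_ker, mem_F_iff]
  constructor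
  · intro h t ht
    have := congrFun h t
    simpa [cutMap, ht] using this
  · intro h
    funext t
    by_cases ht : m ≤ (t:ℕ) <;> simp [cutMap, ht, h]

lemma dim_inter_add_rank {k n : ℕ} (A : Fin k × Fin n → ℂ) (hA : finrank ℂ (rowSpan A) = k)
    (m : ℕ) :
    finrank ℂ ↥(rowSpan A ⊓ intervalSubspaceN n 1 m) +
      (Matrix.of fun (i : Fin k) (j : Fin n) => if m ≤ (j:ℕ) then A (i,j) else 0).rank = k := by
  classical
  set Λ := rowSpan A with hΛ
  set φ : ↥Λ →ₗ[ℂ] (Fin n → ℂ) := (cutMap n m) ∘ₗ Λ.subtype with hφ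
  have hker : finrank ℂ ↥(LinearMap.ker φ) = finrank ℂ ↥(Λ ⊓ intervalSubspaceN n 1 m) := by
    rw [hφ, LinearMap.ker_comp, ker_cutMap]
    rw [← Submodule.finrank_map_subtype_eq Λ, Submodule.map_comap_subtype]
  have hrange : finrank ℂ ↥(LinearMap.range φ) =
      (Matrix.of fun (i : Fin k) (j : Fin n) => if m ≤ (j:ℕ) then A (i,j) else 0).rank := by
    rw [Matrix.rank_eq_finrank_span_row]
    rw [hφ, LinearMap.range_comp, Submodule.range_subtype]
    have : Submodule.map (cutMap n m) Λ =
        Submodule.span ℂ (Set.range fun i : Fin k =>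
          (Matrix.of fun (i : Fin k) (j : Fin n) => if m ≤ (j:ℕ) then A (i,j) else 0) i) := by
      have hfun : (⇑(cutMap n m) ∘ fun i : Fin k => fun j => A (i,j)) =
          (fun i : Fin k => (Matrix.of fun (i : Fin k) (j : Fin n) =>
            if m ≤ (j:ℕ) then A (i,j) else 0) i) := by
        funext i; funext t; simp [cutMap, Matrix.of_apply]
      rw [hΛ, rowSpan, Submodule.map_span, ← Set.range_comp, hfun]
    rw [this]
    rfl
  have := LinearMap.finrank_range_add_finrank_ker φ
  rw [hker, hrange] at this
  rw [hA] at this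
  omega

-- Zariski topology lemmas
lemma zl_closed {σ : Type*} (I : Ideal (MvPolynomial σ ℂ)) :
    @IsClosed _ (zariskiTop σ) (MvPolynomial.zeroLocus ℂ I) := by
  rw [← @isOpen_compl_iff]
  exact TopologicalSpace.GenerateOpen.basic _ ⟨I, rfl⟩

lemma mem_zl_span {σ : Type*} (S : Set (MvPolynomial σ ℂ)) (x : σ → ℂ) :
    x ∈ MvPolynomial.zeroLocus ℂ (Ideal.span S) ↔ ∀ p ∈ S, MvPolynomial.eval x p = 0 := by
  constructor
  · intro h p hp; exact h p (Ideal.subset_span hp)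
  · intro h p hp
    induction hp using Submodule.span_induction with
    | mem q hq => exact h q hq
    | zero => simp
    | add q r _ _ hq hr => simp [MvPolynomial.coe_aeval_eq_eval] at hq hr; simp [hq, hr]
    | smul r q _ hq => simp [MvPolynomial.coe_aeval_eq_eval] at hq; simp [smul_eq_mul, hq]

lemma exists_poly_of_isOpen {σ : Type*} {U : Set (σ → ℂ)} (hU : @IsOpen _ (zariskiTop σ) U)
    {x : σ → ℂ} (hx : x ∈ U) :
    ∃ p : MvPolynomial σ ℂ, MvPolynomial.eval x p ≠ 0 ∧
      {y | MvPolynomial.eval y p ≠ 0} ⊆ U := by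
  have hU' : TopologicalSpace.GenerateOpen
      {s | ∃ I : Ideal (MvPolynomial σ ℂ), s = (MvPolynomial.zeroLocus ℂ I)ᶜ} U := hU
  clear hU
  induction hU' with
  | basic s hs =>
    obtain ⟨I, rfl⟩ := hs
    have : ¬ (∀ p ∈ I, MvPolynomial.eval x p = 0) := hx
    push_neg at this
    obtain ⟨p, hpI, hpx⟩ := this
    exact ⟨p, hpx, fun y hy hyz => hy (hyz p hpI)⟩
  | univ => exact ⟨1, by simp, by simp⟩
  | inter s t _ _ ihs iht =>
    obtain ⟨p, hp1, hp2⟩ := ihs hx.1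
    obtain ⟨q, hq1, hq2⟩ := iht hx.2
    refine ⟨p * q, by simp [hp1, hq1], ?_⟩
    intro y hy
    have hy' : (MvPolynomial.eval y) p ≠ 0 ∧ (MvPolynomial.eval y) q ≠ 0 := by
      have h2 : (MvPolynomial.eval y) (p * q) ≠ 0 := hy
      rw [_root_.map_mul] at h2
      exact mul_ne_zero_iff.mp h2
    exact ⟨hp2 hy'.1, hq2 hy'.2⟩
  | sUnion S _ ih =>
    obtain ⟨s, hsS, hxs⟩ := hx
    obtain ⟨p, h1, h2⟩ := ih s hsS hxs
    exact ⟨p, h1, h2.trans (Set.subset_sUnion_of_mem hsS)⟩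

-- adapted basis for a Schubert point
lemma exists_adapted_basis {k n : ℕ} (u : Fin k → ℕ) (hu : StrictMono u)
    (Λ : Submodule ℂ (Fin n → ℂ)) (hΛ : finrank ℂ Λ = k)
    (h : ∀ i : Fin k, (i : ℕ) + 1 ≤ finrank ℂ ↥(Λ ⊓ intervalSubspaceN n 1 (u i))) :
    ∃ c : Fin k → (Fin n → ℂ), (∀ i, c i ∈ Λ) ∧
      (∀ i, c i ∈ intervalSubspaceN n 1 (u i)) ∧ LinearIndependent ℂ c ∧
      Submodule.span ℂ (Set.range c) = Λ := by
  classical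
  have key : ∀ m (hm : m ≤ k), ∃ c : Fin m → (Fin n → ℂ),
      (∀ i : Fin m, c i ∈ Λ ⊓ intervalSubspaceN n 1 (u (Fin.castLE hm i))) ∧
      LinearIndependent ℂ c := by
    intro m
    induction m with
    | zero => exact fun _ => ⟨Fin.elim0, fun i => i.elim0, linearIndependent_empty_type⟩
    | succ m ih =>
      intro hm
      obtain ⟨c, hc1, hc2⟩ := ih (by omega)
      have hlast : ∀ i : Fin m, c i ∈ Λ ⊓ intervalSubspaceN n 1 (u ⟨m, by omega⟩) := by
        intro i
        refine ⟨(hc1 i).1, ?_⟩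
        refine interval_mono le_rfl ?_ (hc1 i).2
        exact hu.monotone (by simp [Fin.le_def])
      have hfr : finrank ℂ ↥(Submodule.span ℂ (Set.range c)) = m := by
        rw [finrank_span_eq_card hc2, Fintype.card_fin]
      have hex : ∃ x ∈ Λ ⊓ intervalSubspaceN n 1 (u ⟨m, by omega⟩),
          x ∉ Submodule.span ℂ (Set.range c) := by
        by_contra hcon
        push_neg at hcon
        have hle : Λ ⊓ intervalSubspaceN n 1 (u ⟨m, by omega⟩) ≤
            Submodule.span ℂ (Set.range c) := fun x hx => hcon x hx
        have := Submodule.finrank_mono hle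
        have hdim : m + 1 ≤ finrank ℂ ↥(Λ ⊓ intervalSubspaceN n 1 (u ⟨m, by omega⟩)) := by
          simpa using h ⟨m, by omega⟩
        have hle2 := le_trans hdim this
        omega
      obtain ⟨x, hx1, hx2⟩ := hex
      refine ⟨Fin.snoc c x, ?_, linearIndependent_fin_snoc.mpr ⟨hc2, hx2⟩⟩
      intro i
      refine Fin.lastCases ?_ ?_ i
      · rw [Fin.snoc_last]
        convert hx1 using 3
        rfl
      · intro j
        rw [Fin.snoc_castSucc]
        convert hc1 j using 3
        rfl
  obtain ⟨c, hc1, hc2⟩ := key k le_rfl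
  have hsub : Submodule.span ℂ (Set.range c) ≤ Λ := by
    rw [Submodule.span_le]
    rintro y ⟨i, rfl⟩
    exact (hc1 i).1
  have hspan : Submodule.span ℂ (Set.range c) = Λ := by
    apply Submodule.eq_of_le_of_finrank_le hsub
    rw [finrank_span_eq_card hc2, Fintype.card_fin, hΛ]
  refine ⟨c, fun i => (hc1 i).1, fun i => ?_, hc2, hspan⟩
  have := (hc1 i).2
  convert this using 3
  exact Iff.rfl

lemma elimination {k n : ℕ} (u : Fin k → ℕ) (hu : StrictMono u) (hkn : k ≤ n)
    (r : Fin k → Fin n → ℂ) (hr : ∀ i, r i ∈ intervalSubspaceN n 1 (u i))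
    (hminor : ∀ (s : ℕ) (h1 : s ≤ k) (h2 : s ≤ n),
      (Matrix.of fun a b : Fin s => r (Fin.castLE h1 a) (Fin.castLE h2 b)).det ≠ 0) :
    ∃ b : Fin k → Fin n → ℂ,
      (∀ j : Fin k, b j ∈ intervalSubspaceN n ((j : ℕ) + 1) (u j)) ∧
      LinearIndependent ℂ b ∧
      Submodule.span ℂ (Set.range b) = Submodule.span ℂ (Set.range r) := by
  classical
  -- the correction coefficients
  have hMdet : ∀ i : Fin k, (Matrix.of fun a b : Fin i.1 =>
      r (Fin.castLE i.2.le a) (Fin.castLE (le_trans i.2.le hkn) b)).det ≠ 0 :=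
    fun i => hminor i.1 i.2.le (le_trans i.2.le hkn)
  set M : (i : Fin k) → Matrix (Fin i.1) (Fin i.1) ℂ := fun i =>
    Matrix.of fun a b : Fin i.1 =>
      r (Fin.castLE i.2.le a) (Fin.castLE (le_trans i.2.le hkn) b) with hM
  set v : (i : Fin k) → Fin i.1 → ℂ := fun i b =>
    r i (Fin.castLE (le_trans i.2.le hkn) b) with hv
  set x : (i : Fin k) → Fin i.1 → ℂ := fun i => Matrix.vecMul (v i) (M i)⁻¹ with hx
  have hxM : ∀ i : Fin k, Matrix.vecMul (x i) (M i) = v i := by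
    intro i
    rw [hx]
    rw [Matrix.vecMul_vecMul, Matrix.nonsing_inv_mul _ (isUnit_iff_ne_zero.mpr (hMdet i)),
      Matrix.vecMul_one]
  set b : Fin k → Fin n → ℂ := fun i =>
    r i - ∑ a : Fin i.1, x i a • r (Fin.castLE i.2.le a) with hb
  -- coordinates below i vanish
  have hbelow : ∀ (i : Fin k) (t : Fin n), (t : ℕ) < (i : ℕ) → b i t = 0 := by
    intro i t ht
    have htn : (t : ℕ) < i.1 := ht
    set tm : Fin i.1 := ⟨t.1, htn⟩ with htm
    have hcast : Fin.castLE (le_trans i.2.le hkn) tm = t := Fin.ext rfl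
    have hsum : (∑ a : Fin i.1, x i a • r (Fin.castLE i.2.le a)) t
        = Matrix.vecMul (x i) (M i) tm := by
      simp only [Finset.sum_apply, Pi.smul_apply, smul_eq_mul, Matrix.vecMul,
        dotProduct, hM, Matrix.of_apply, hcast]
    have : b i t = r i t - Matrix.vecMul (x i) (M i) tm := by
      rw [hb]; simp only [Pi.sub_apply, hsum]
    rw [this, hxM i, hv]
    simp [hcast]
  -- each b i lies in its interval
  have hbmem : ∀ i : Fin k, b i ∈ intervalSubspaceN n ((i : ℕ) + 1) (u i) := by
    intro i
    rw [mem_interval_iff]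
    intro t htc
    rcases htc with h1 | h2
    · exact hbelow i t (by omega)
    · -- t ≥ u i : all rows used vanish there
      have hri : r i t = 0 := (mem_F_iff (r i)).mp (hr i) t (by omega)
      have hra : ∀ a : Fin i.1, r (Fin.castLE i.2.le a) t = 0 := by
        intro a
        apply (mem_F_iff _).mp (hr _) t
        have : u (Fin.castLE i.2.le a) ≤ u i := hu.monotone (by
          simp [Fin.le_def])
        omega
      rw [hb]
      simp only [Pi.sub_apply, Finset.sum_apply, Pi.smul_apply, smul_eq_mul, hri, hra]
      simp
  -- r is linearly independent
  have hrind : LinearIndependent ℂ r := by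
    have hunit : IsUnit (Matrix.of fun a b : Fin k =>
        r (Fin.castLE le_rfl a) (Fin.castLE hkn b)) :=
      (Matrix.isUnit_iff_isUnit_det _).mpr
        (isUnit_iff_ne_zero.mpr (hminor k le_rfl hkn))
    have hrows : LinearIndependent ℂ (fun a : Fin k => (Matrix.of fun a b : Fin k =>
        r (Fin.castLE le_rfl a) (Fin.castLE hkn b)) a) :=
      Matrix.linearIndependent_rows_iff_isUnit.mpr hunit
    have hcomp : (fun a : Fin k => (Matrix.of fun a b : Fin k =>
        r (Fin.castLE le_rfl a) (Fin.castLE hkn b)) a) =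
        (fun a : Fin k => (LinearMap.funLeft ℂ ℂ (Fin.castLE hkn)) (r a)) := by
      funext a; funext c
      have hca : Fin.castLE le_rfl a = a := Fin.ext rfl
      simp [LinearMap.funLeft_apply, hca]
    rw [hcomp] at hrows
    exact LinearIndependent.of_comp _ hrows
  -- spans agree
  have hble : ∀ i : Fin k, b i ∈ Submodule.span ℂ (Set.range r) := by
    intro i
    rw [hb]
    apply Submodule.sub_mem
    · exact Submodule.subset_span ⟨i, rfl⟩
    · exact Submodule.sum_mem _ fun a _ =>
        Submodule.smul_mem _ _ (Submodule.subset_span ⟨_, rfl⟩)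
  have hrle : ∀ i : Fin k, r i ∈ Submodule.span ℂ (Set.range b) := by
    have key : ∀ m : ℕ, ∀ i : Fin k, i.1 = m → r i ∈ Submodule.span ℂ (Set.range b) := by
      intro m
      induction m using Nat.strong_induction_on with
      | _ m ih =>
        intro i him
        have hrepr : r i = b i + ∑ a : Fin i.1, x i a • r (Fin.castLE i.2.le a) :=
          (sub_add_cancel _ _).symm
        rw [hrepr]
        apply Submodule.add_mem
        · exact Submodule.subset_span ⟨i, rfl⟩
        · apply Submodule.sum_mem
          intro a _
          apply Submodule.smul_mem
          exact ih a.1 (by omega) (Fin.castLE i.2.le a) rfl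
    exact fun i => key i.1 i rfl
  have hspan : Submodule.span ℂ (Set.range b) = Submodule.span ℂ (Set.range r) := by
    apply le_antisymm
    · rw [Submodule.span_le]; rintro y ⟨i, rfl⟩; exact hble i
    · rw [Submodule.span_le]; rintro y ⟨i, rfl⟩; exact hrle i
  have hbind : LinearIndependent ℂ b := by
    apply linearIndependent_iff_card_eq_finrank_span.mpr
    have h1 := linearIndependent_iff_card_eq_finrank_span.mp hrind
    unfold Set.finrank at h1 ⊢
    rw [hspan]
    exact h1
  exact ⟨b, hbmem, hbind, hspan⟩

end Aux

section Aux2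
open Matrix

-- curve of matrices A(t) = C + t D with D the "identity-pattern"
def curveSub {k n : ℕ} (c : Fin k → Fin n → ℂ) : Fin k × Fin n → Polynomial ℂ :=
  fun p => Polynomial.C (c p.1 p.2) +
    Polynomial.C (if (p.1 : ℕ) = (p.2 : ℕ) then (1:ℂ) else 0) * Polynomial.X

def curveAt {k n : ℕ} (c : Fin k → Fin n → ℂ) (t : ℂ) : Fin k × Fin n → ℂ :=
  fun p => c p.1 p.2 + t * (if (p.1 : ℕ) = (p.2 : ℕ) then (1:ℂ) else 0)

lemma eval_curve {k n : ℕ} (c : Fin k → Fin n → ℂ) (p : MvPolynomial (Fin k × Fin n) ℂ)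
    (t : ℂ) :
    Polynomial.eval t (MvPolynomial.aeval (curveSub c) p) =
      MvPolynomial.eval (curveAt c t) p := by
  induction p using MvPolynomial.induction_on with
  | C a => simp [curveSub, curveAt]
  | add p q hp hq => simp [hp, hq]
  | mul_X p v hp =>
    have hv : Polynomial.eval t (curveSub c v) = curveAt c t v := by
      by_cases h : (v.1 : ℕ) = (v.2 : ℕ) <;> simp [curveSub, curveAt, h, mul_comm]
    simp [hp, hv, curveSub, curveAt]
    by_cases h : (v.1 : ℕ) = (v.2 : ℕ) <;> simp [h, mul_comm]

lemma curve_zero {k n : ℕ} (c : Fin k → Fin n → ℂ) :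
    curveAt c 0 = fun p => c p.1 p.2 := by
  funext p; simp [curveAt]

-- leading principal block of the curve, as a polynomial
def blockPoly {k n : ℕ} (c : Fin k → Fin n → ℂ) (s : ℕ) (h1 : s ≤ k) (h2 : s ≤ n) :
    Polynomial ℂ :=
  (Matrix.of fun a b : Fin s =>
    Polynomial.C (c (Fin.castLE h1 a) (Fin.castLE h2 b)) +
      if a = b then Polynomial.X else 0).det

lemma blockPoly_ne_zero {k n : ℕ} (c : Fin k → Fin n → ℂ) (s : ℕ) (h1 : s ≤ k) (h2 : s ≤ n) :
    blockPoly c s h1 h2 ≠ 0 := by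
  classical
  have : blockPoly c s h1 h2 =
      (Matrix.of fun a b : Fin s => -(c (Fin.castLE h1 a) (Fin.castLE h2 b))).charpoly := by
    rw [Matrix.charpoly, blockPoly]
    congr 1
    ext a b
    rw [Matrix.charmatrix_apply]
    by_cases hab : a = b <;>
      simp [hab, Matrix.diagonal_apply, Matrix.of_apply, sub_neg_eq_add, add_comm]
  rw [this]
  exact (Matrix.charpoly_monic _).ne_zero

lemma blockPoly_eval {k n : ℕ} (c : Fin k → Fin n → ℂ) (s : ℕ) (h1 : s ≤ k) (h2 : s ≤ n)
    (t : ℂ) :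
    Polynomial.eval t (blockPoly c s h1 h2) =
      (Matrix.of fun a b : Fin s =>
        curveAt c t (Fin.castLE h1 a, Fin.castLE h2 b)).det := by
  classical
  rw [blockPoly, show (Polynomial.eval t : Polynomial ℂ → ℂ) = (Polynomial.evalRingHom t : Polynomial ℂ →+* ℂ) from rfl,
    RingHom.map_det]
  congr 1
  ext a b
  simp only [RingHom.mapMatrix_apply, Matrix.map_apply, Matrix.of_apply, curveAt]
  rw [_root_.map_add, apply_ite (Polynomial.evalRingHom t)]
  simp only [Polynomial.coe_evalRingHom, Polynomial.eval_C, Polynomial.eval_X, map_zero]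
  by_cases hab : a = b
  · have h2' : ((Fin.castLE h1 a : Fin k) : ℕ) = ((Fin.castLE h2 b : Fin n) : ℕ) := by
      simp [hab]
    simp [hab, h2']
  · have h2' : ¬ ((Fin.castLE h1 a : Fin k) : ℕ) = ((Fin.castLE h2 b : Fin n) : ℕ) := by
      intro h
      exact hab (Fin.ext (by simpa using h))
    simp only [Fin.coe_castLE] at h2'
    simp [hab, h2']

-- the projection from full-rank matrices to the Grassmannian
def grPi (k n : ℕ) : {A : Fin k × Fin n → ℂ // finrank ℂ (rowSpan A) = k} → Gr k n :=
  fun A => ⟨rowSpan A.1, A.2⟩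

lemma eval_minorP {k n : ℕ} (m : ℕ) {s : ℕ} (f : Fin s → Fin k) (g : Fin s → Fin n)
    (A : Fin k × Fin n → ℂ) :
    MvPolynomial.eval A (Matrix.of fun a b : Fin s =>
        if m ≤ ((g b : Fin n) : ℕ) then MvPolynomial.X (f a, g b)
        else (0 : MvPolynomial (Fin k × Fin n) ℂ)).det =
      ((Matrix.of fun (i : Fin k) (j : Fin n) =>
        if m ≤ (j : ℕ) then A (i, j) else 0).submatrix f g).det := by
  classical
  rw [RingHom.map_det]
  congr 1
  ext a b
  simp only [RingHom.mapMatrix_apply, Matrix.map_apply, Matrix.of_apply,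
    Matrix.submatrix_apply, apply_ite (MvPolynomial.eval A), MvPolynomial.eval_X, map_zero]

lemma schubert_isClosed {k n : ℕ} (u : Fin k → ℕ) :
    IsClosed (SchubertXu n u : Set (Gr k n)) := by
  classical
  set PS : Set (MvPolynomial (Fin k × Fin n) ℂ) :=
    {p | ∃ (i : Fin k) (f : Fin (k - i.1) → Fin k) (g : Fin (k - i.1) → Fin n),
      p = (Matrix.of fun a b : Fin (k - i.1) =>
        if u i ≤ ((g b : Fin n) : ℕ) then MvPolynomial.X (f a, g b)
        else (0 : MvPolynomial (Fin k × Fin n) ℂ)).det} with hPS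
  set Z := MvPolynomial.zeroLocus ℂ (Ideal.span PS) with hZdef
  have hiff : ∀ (A : Fin k × Fin n → ℂ) (hA : finrank ℂ (rowSpan A) = k) (i : Fin k),
      ((i : ℕ) + 1 ≤ finrank ℂ ↥(rowSpan A ⊓ intervalSubspaceN n 1 (u i))) ↔
      ∀ (f : Fin (k - i.1) → Fin k) (g : Fin (k - i.1) → Fin n),
        ((Matrix.of fun (i' : Fin k) (j : Fin n) =>
          if u i ≤ (j : ℕ) then A (i', j) else 0).submatrix f g).det = 0 := by
    intro A hA i
    have hd := dim_inter_add_rank A hA (u i)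
    have hik := i.2
    constructor
    · intro h f g
      by_contra hdet
      have hle := (rank_ge_iff_minor _ (k - i.1)).mpr ⟨f, g, hdet⟩
      omega
    · intro h
      have hnot : ¬ (k - i.1 ≤ (Matrix.of fun (i' : Fin k) (j : Fin n) =>
          if u i ≤ (j : ℕ) then A (i', j) else 0).rank) := by
        intro hle
        obtain ⟨f, g, hdet⟩ := (rank_ge_iff_minor _ (k - i.1)).mp hle
        exact hdet (h f g)
      omega
  have hpre : (grPi k n ⁻¹' (SchubertXu n u)) = Subtype.val ⁻¹' Z := by
    ext A
    have hmem : grPi k n A ∈ SchubertXu n u ↔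
        ∀ i : Fin k, (i : ℕ) + 1 ≤
          finrank ℂ ↥(rowSpan A.1 ⊓ intervalSubspaceN n 1 (u i)) := Iff.rfl
    have hZmem : A.1 ∈ Z ↔ ∀ p ∈ PS, MvPolynomial.eval A.1 p = 0 := mem_zl_span PS A.1
    simp only [Set.mem_preimage, hmem, hZmem]
    constructor
    · rintro h p ⟨i, f, g, rfl⟩
      rw [eval_minorP]
      exact ((hiff A.1 A.2 i).mp (h i)) f g
    · intro h i
      apply (hiff A.1 A.2 i).mpr
      intro f g
      rw [← eval_minorP (u i) f g A.1]
      exact h _ ⟨i, f, g, rfl⟩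
  rw [← isOpen_compl_iff]
  show IsOpen ((grPi k n) ⁻¹' (SchubertXu n u)ᶜ)
  rw [Set.preimage_compl, hpre]
  apply isOpen_compl_iff.mpr
  exact (zl_closed (Ideal.span PS)).preimage continuous_subtype_val

theorem schubert_eq_rankVariety {k n : ℕ} (u : Fin k → ℕ)
    (hu : StrictMono u) (hu1 : ∀ i, 1 ≤ u i) (hun : ∀ i, u i ≤ n) :
    SchubertXu n u = rankVarietyN n (fun j : Fin k => (j : ℕ) + 1) u := by
  classical
  have hui : ∀ i : Fin k, (i : ℕ) + 1 ≤ u i := by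
    have key : ∀ m (hm : m < k), m + 1 ≤ u ⟨m, hm⟩ := by
      intro m
      induction m with
      | zero => intro hm; exact hu1 _
      | succ p ih =>
        intro hm
        have h1 := ih (by omega)
        have h2 : u ⟨p, by omega⟩ < u ⟨p + 1, hm⟩ := hu (by simp [Fin.lt_def])
        omega
    intro i; exact key i.1 i.2
  have hkn : k ≤ n := by
    rcases Nat.eq_zero_or_pos k with hk | hk
    · omega
    · set i0 : Fin k := ⟨k - 1, by omega⟩ with hi0
      have h1 := hui i0
      have h2 := hun i0
      have h3 : (i0 : ℕ) = k - 1 := rfl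
      omega
  set S : Set (Gr k n) := {x : Gr k n | ∃ b : Fin k → (Fin n → ℂ),
    (∀ j, b j ∈ intervalSubspaceN n ((fun j : Fin k => (j : ℕ) + 1) j) (u j)) ∧
    LinearIndependent ℂ b ∧
      x.1 = Submodule.span ℂ (Set.range b)} with hS
  have hSsub : S ⊆ SchubertXu n u := by
    rintro x ⟨b, hbW, hbind, hbspan⟩ i
    have hsk : (i : ℕ) + 1 ≤ k := i.2
    set b' : Fin ((i : ℕ) + 1) → (Fin n → ℂ) := fun j => b (Fin.castLE hsk j) with hb'
    have hind' : LinearIndependent ℂ b' := hbind.comp _ (Fin.castLE_injective hsk)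
    have hle : Submodule.span ℂ (Set.range b') ≤ x.1 ⊓ intervalSubspaceN n 1 (u i) := by
      rw [Submodule.span_le]
      rintro y ⟨j, rfl⟩
      constructor
      · rw [hbspan]; exact Submodule.subset_span ⟨_, rfl⟩
      · have hmon : u (Fin.castLE hsk j) ≤ u i := hu.monotone (by
          simp only [Fin.le_def, Fin.coe_castLE]
          exact Nat.lt_succ_iff.mp j.2)
        exact interval_mono (Nat.le_add_left 1 _) hmon (hbW (Fin.castLE hsk j))
    have hcard : finrank ℂ ↥(Submodule.span ℂ (Set.range b')) = (i : ℕ) + 1 := by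
      rw [finrank_span_eq_card hind', Fintype.card_fin]
    have hmono := Submodule.finrank_mono hle
    omega
  apply Set.Subset.antisymm
  · -- density
    intro Λ hΛ
    have hmc : Λ ∈ closure S := by
      rw [mem_closure_iff]
      intro U hU hΛU
      obtain ⟨c, hcΛ, hcF, hcind, hcspan⟩ := exists_adapted_basis u hu Λ.1 Λ.2 hΛ
      set A0 : Fin k × Fin n → ℂ := fun p => c p.1 p.2 with hA0
      have hrowA0 : rowSpan A0 = Λ.1 := by
        rw [← hcspan]; rfl
      have hfr0 : finrank ℂ (rowSpan A0) = k := by rw [hrowA0]; exact Λ.2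
      have hπ : grPi k n ⟨A0, hfr0⟩ = Λ := Subtype.ext hrowA0
      have hUopen : IsOpen (grPi k n ⁻¹' U) := hU
      obtain ⟨V, hVopen, hVeq⟩ := isOpen_induced_iff.mp hUopen
      have hA0V : A0 ∈ V := by
        have hm : (⟨A0, hfr0⟩ : {A : Fin k × Fin n → ℂ // finrank ℂ (rowSpan A) = k}) ∈
            grPi k n ⁻¹' U := by
          simp only [Set.mem_preimage, hπ]; exact hΛU
        rw [← hVeq] at hm
        exact hm
      obtain ⟨p, hp0, hpV⟩ := exists_poly_of_isOpen hVopen hA0V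
      set q := MvPolynomial.aeval (curveSub c) p with hqdef
      have hq0 : q ≠ 0 := by
        intro h
        have he := eval_curve c p 0
        rw [← hqdef, h, curve_zero] at he
        simp only [Polynomial.eval_zero] at he
        exact hp0 he.symm
      have hbadq : {t : ℂ | Polynomial.eval t q = 0}.Finite :=
        Polynomial.finite_setOf_isRoot hq0
      have hbadP : (⋃ s : Fin (k + 1), {t : ℂ | Polynomial.eval t
          (blockPoly c s.1 (Nat.lt_succ_iff.mp s.2)
            (le_trans (Nat.lt_succ_iff.mp s.2) hkn)) = 0}).Finite :=
        Set.finite_iUnion fun s =>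
          Polynomial.finite_setOf_isRoot (blockPoly_ne_zero c s.1 _ _)
      obtain ⟨t, ht⟩ := ((hbadq.union hbadP).infinite_compl).nonempty
      rw [Set.mem_compl_iff, Set.mem_union, not_or] at ht
      obtain ⟨htq, htP⟩ := ht
      have htq' : Polynomial.eval t q ≠ 0 := htq
      have htP' : ∀ (s : ℕ) (h1 : s ≤ k) (h2 : s ≤ n),
          Polynomial.eval t (blockPoly c s h1 h2) ≠ 0 := by
        intro s h1 h2 hz
        apply htP
        rw [Set.mem_iUnion]
        exact ⟨⟨s, by omega⟩, hz⟩
      set r : Fin k → Fin n → ℂ := fun i j => curveAt c t (i, j) with hrdef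
      have hminor : ∀ (s : ℕ) (h1 : s ≤ k) (h2 : s ≤ n),
          (Matrix.of fun a b : Fin s =>
            r (Fin.castLE h1 a) (Fin.castLE h2 b)).det ≠ 0 := by
        intro s h1 h2
        rw [show (Matrix.of fun a b : Fin s => r (Fin.castLE h1 a) (Fin.castLE h2 b)) =
          (Matrix.of fun a b : Fin s =>
            curveAt c t (Fin.castLE h1 a, Fin.castLE h2 b)) from rfl]
        rw [← blockPoly_eval c s h1 h2 t]
        exact htP' s h1 h2
      have hrF : ∀ i, r i ∈ intervalSubspaceN n 1 (u i) := by
        intro i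
        rw [mem_F_iff]
        intro t' ht'
        have hc0 : c i t' = 0 := (mem_F_iff (c i)).mp (hcF i) t' ht'
        have hne : ¬ ((i : ℕ) = (t' : ℕ)) := by
          have := hui i; omega
        simp [hrdef, curveAt, hc0, hne]
      obtain ⟨b, hbW, hbind, hbspan⟩ := elimination u hu hkn r hrF hminor
      have hrowt : rowSpan (curveAt c t) = Submodule.span ℂ (Set.range b) := by
        rw [hbspan]; rfl
      have hfrt : finrank ℂ (rowSpan (curveAt c t)) = k := by
        rw [hrowt, finrank_span_eq_card hbind, Fintype.card_fin]
      set x : Gr k n := grPi k n ⟨curveAt c t, hfrt⟩ with hxdef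
      have hxU : x ∈ U := by
        have hmV : curveAt c t ∈ V := by
          apply hpV
          show MvPolynomial.eval (curveAt c t) p ≠ 0
          rw [← eval_curve c p t]
          exact htq'
        have : (⟨curveAt c t, hfrt⟩ :
            {A : Fin k × Fin n → ℂ // finrank ℂ (rowSpan A) = k}) ∈
            Subtype.val ⁻¹' V := hmV
        rw [hVeq] at this
        exact this
      have hxS : x ∈ S := by
        refine ⟨b, hbW, hbind, ?_⟩
        show (grPi k n ⟨curveAt c t, hfrt⟩).1 = _
        exact hrowt
      exact ⟨x, hxU, hxS⟩
    exact hmc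
  · exact closure_minimal hSsub (schubert_isClosed u)

end Aux2

end
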